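/- Let N ≥ 2 be an integer and let p⁻ be a real constant with 1 < p⁻ < N. Let C̃ > 0, L > 0, M > 0, and let D : (0,∞) → [0,∞) be a function such that for every μ₀ > 0 and every k > 0, D(μ₀) ≤ (C̃·M·k + L) · μ₀^{−p⁻/(p⁻−1)} + (C̃·(M·k)^{N/(N−p⁻)} + C̃) · k^{−N p⁻/(N−p⁻)}. Then there exists a constant C₁ > 0 depending only on N, p⁻, C̃ and L such that for every μ₀ > 0, μ₀ · D(μ₀)^{(N−1)/N} ≤ C₁ · M + C₁ · μ₀^{(p⁻−N)/(N p⁻−N)}. -/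

import Mathlib

/-!
Write `γ = N/(N-p)`, `β = Np/(N-p)` and split the truncation level as `k = a + b`: the part of the
bound linear in `k` splits accordingly, and the parts decreasing in `k` are bounded by their values
at `a` and at `b`. For `a = (M/μ)^{1/(N-1)} μ^{1/(p-1)}` both `M a μ^{-p/(p-1)}` and `M^γ a^{γ-β}`
equal `(M/μ)^{N/(N-1)}`; for `b = μ^{(N-p)/(N(p-1))}` we get `b^{-β} = μ^{-p/(p-1)}`, and the mixed
term `M b μ^{-p/(p-1)}` is the geometric mean of these two quantities with weights `(N-1)/N` and
`1/N`, hence at most their sum. So `D ≤ A ((M/μ)^{N/(N-1)} + μ^{-p/(p-1)})`, and the claim follows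
because `t ↦ t^{(N-1)/N}` is subadditive.
-/

open Real

lemma rpow_mul_rpow_one_sub_le_add {x y w : ℝ} (hx : 0 ≤ x) (hy : 0 ≤ y) (hw₀ : 0 ≤ w)
    (hw₁ : w ≤ 1) : x ^ w * y ^ (1 - w) ≤ x + y := by
  have := geom_mean_le_arith_mean2_weighted hw₀ (sub_nonneg.2 hw₁) hx hy (by ring)
  linarith [mul_nonneg (sub_nonneg.2 hw₁) hx, mul_nonneg hw₀ hy]

lemma truncation_split {C L M Y γ δ a b : ℝ} (hC : 0 ≤ C) (hM : 0 ≤ M) (ha : 0 < a) (hb : 0 < b)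
    (hδ : δ ≤ 0) (hγδ : γ + δ ≤ 0) :
    (C * M * (a + b) + L) * Y + (C * (M * (a + b)) ^ γ + C) * (a + b) ^ δ
      ≤ C * M * a * Y + C * M * b * Y + L * Y + C * (M ^ γ * a ^ (γ + δ)) + C * b ^ δ := by
  have hab : 0 < a + b := by linarith
  have hγδ_le : (a + b) ^ (γ + δ) ≤ a ^ (γ + δ) := rpow_le_rpow_of_nonpos ha (by linarith) hγδ
  have hδ_le : (a + b) ^ δ ≤ b ^ δ := rpow_le_rpow_of_nonpos hb (by linarith) hδ
  have hsplit : (C * (M * (a + b)) ^ γ + C) * (a + b) ^ δ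
      = C * (M ^ γ * (a + b) ^ (γ + δ)) + C * (a + b) ^ δ := by
    rw [mul_rpow hM hab.le, rpow_add hab]; ring
  rw [hsplit]
  have : C * (M ^ γ * (a + b) ^ (γ + δ)) ≤ C * (M ^ γ * a ^ (γ + δ)) := by gcongr
  linarith [mul_le_mul_of_nonneg_left hδ_le hC]

theorem le_of_forall_truncation {n p C L M μ D : ℝ} (hp : 1 < p) (hpn : p < n) (hC : 0 ≤ C)
    (hL : 0 ≤ L) (hM : 0 < M) (hμ : 0 < μ)
    (h : ∀ k : ℝ, 0 < k → D ≤ (C * M * k + L) * μ ^ (-p / (p - 1))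
        + (C * (M * k) ^ (n / (n - p)) + C) * k ^ (-n * p / (n - p))) :
    D ≤ (3 * C + L) * ((M / μ) ^ (n / (n - 1)) + μ ^ (-p / (p - 1))) := by
  have hp₁ : p - 1 ≠ 0 := by linarith
  have hn₁ : n - 1 ≠ 0 := by linarith
  have hnp : n - p ≠ 0 := by linarith
  have hn : n ≠ 0 := by linarith
  -- in logarithmic coordinates every exponent identity below is linear algebra
  obtain ⟨s, rfl⟩ : ∃ s, exp s = M := ⟨log M, exp_log hM⟩
  obtain ⟨t, rfl⟩ : ∃ t, exp t = μ := ⟨log μ, exp_log hμ⟩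
  set X := (exp s / exp t) ^ (n / (n - 1))
  set Y := exp t ^ (-p / (p - 1))
  set a := exp ((s - t) / (n - 1) + t / (p - 1))
  set b := exp (t * (n - p) / (n * (p - 1)))
  have hMa : exp s * a * Y = X := by
    simp only [X, Y, a, ← exp_sub, ← exp_mul, ← exp_add]; congr 1; field_simp; ring
  have hMa_rpow : exp s ^ (n / (n - p)) * a ^ (n / (n - p) + -n * p / (n - p)) = X := by
    simp only [X, a, ← exp_sub, ← exp_mul, ← exp_add]; congr 1; field_simp; ring
  have hb_rpow : b ^ (-n * p / (n - p)) = Y := by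
    simp only [Y, b, ← exp_mul]; congr 1; field_simp
  have hMb : exp s * b * Y = X ^ ((n - 1) / n) * Y ^ (1 - (n - 1) / n) := by
    simp only [X, Y, b, ← exp_sub, ← exp_mul, ← exp_add]; congr 1; field_simp; ring
  have hmixed : exp s * b * Y ≤ X + Y := by
    rw [hMb]
    exact rpow_mul_rpow_one_sub_le_add (by positivity) (by positivity)
      (div_nonneg (by linarith) (by linarith)) (div_le_one_of_le₀ (by linarith) (by linarith))
  have hδ : -n * p / (n - p) ≤ 0 :=
    div_nonpos_of_nonpos_of_nonneg (by nlinarith) (by linarith)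
  have hγδ : n / (n - p) + -n * p / (n - p) ≤ 0 := by
    rw [← add_div]; exact div_nonpos_of_nonpos_of_nonneg (by nlinarith) (by linarith)
  have hsplit := truncation_split (L := L) (Y := Y) (a := a) (b := b) hC hM.le (exp_pos _)
    (exp_pos _) hδ hγδ
  have hD := (h (a + b) (add_pos (exp_pos _) (exp_pos _))).trans hsplit
  rw [mul_assoc C, mul_assoc C, hMa, hMa_rpow, hb_rpow] at hD
  have hX : 0 ≤ X := by positivity
  have hY : 0 ≤ Y := by positivity
  linarith [mul_le_mul_of_nonneg_left hmixed hC, mul_nonneg hL hX, mul_nonneg hC hY]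

lemma mul_rpow_le_of_le_mul_add {θ A D M μ Y : ℝ} (hθ₀ : 0 < θ) (hθ₁ : θ ≤ 1) (hA : 0 ≤ A)
    (hM : 0 ≤ M) (hμ : 0 < μ) (hY : 0 ≤ Y) (hD : 0 ≤ D) (h : D ≤ A * ((M / μ) ^ θ⁻¹ + Y)) :
    μ * D ^ θ ≤ A ^ θ * M + A ^ θ * (μ * Y ^ θ) := by
  have hX : 0 ≤ (M / μ) ^ θ⁻¹ := by positivity
  calc μ * D ^ θ ≤ μ * (A ^ θ * ((M / μ) ^ θ⁻¹ + Y) ^ θ) := by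
        rw [← mul_rpow hA (by positivity)]; gcongr
    _ ≤ μ * (A ^ θ * (((M / μ) ^ θ⁻¹) ^ θ + Y ^ θ)) := by
        gcongr; exact rpow_add_le_add_rpow hX hY hθ₀.le hθ₁
    _ = A ^ θ * M + A ^ θ * (μ * Y ^ θ) := by
        rw [rpow_inv_rpow (by positivity) hθ₀.ne']; field_simp

theorem stmt_1 (N : ℕ) (hN : 2 ≤ N) (pm : ℝ) (hpm1 : 1 < pm) (hpmN : pm < (N : ℝ))
    (Ct L M : ℝ) (hCt : 0 < Ct) (hL : 0 < L) (hM : 0 < M)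
    (D : ℝ → ℝ) (hD_nonneg : ∀ μ₀ : ℝ, 0 < μ₀ → 0 ≤ D μ₀)
    (hyp : ∀ μ₀ : ℝ, 0 < μ₀ → ∀ k : ℝ, 0 < k →
      D μ₀ ≤ (Ct * M * k + L) * μ₀ ^ (-pm / (pm - 1))
        + (Ct * (M * k) ^ ((N : ℝ) / ((N : ℝ) - pm)) + Ct) * k ^ (-(N : ℝ) * pm / ((N : ℝ) - pm))) :
    ∃ C₁ : ℝ, 0 < C₁ ∧ ∀ μ₀ : ℝ, 0 < μ₀ →
      μ₀ * D μ₀ ^ (((N : ℝ) - 1) / (N : ℝ))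
        ≤ C₁ * M + C₁ * μ₀ ^ ((pm - (N : ℝ)) / ((N : ℝ) * pm - (N : ℝ))) := by
  have hN₁ : (1 : ℝ) < N := by exact_mod_cast hN
  have hθ₀ : 0 < ((N : ℝ) - 1) / N := div_pos (by linarith) (by linarith)
  have hθ₁ : ((N : ℝ) - 1) / N ≤ 1 := div_le_one_of_le₀ (by linarith) (by linarith)
  refine ⟨(3 * Ct + L) ^ (((N : ℝ) - 1) / N), by positivity, fun μ₀ hμ₀ => ?_⟩
  have hD := le_of_forall_truncation hpm1 hpmN hCt.le hL.le hM hμ₀ (hyp μ₀ hμ₀)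
  rw [show (N : ℝ) / (N - 1) = (((N : ℝ) - 1) / N)⁻¹ from (inv_div _ _).symm] at hD
  have hexp : μ₀ * (μ₀ ^ (-pm / (pm - 1))) ^ (((N : ℝ) - 1) / N)
      = μ₀ ^ ((pm - N) / (N * pm - N)) := by
    have hpm : pm - 1 ≠ 0 := by linarith
    have hNpm : (N : ℝ) * pm - N ≠ 0 := by nlinarith
    rw [← rpow_mul hμ₀.le, mul_comm, ← rpow_add_one hμ₀.ne']
    congr 1
    field_simp
    ring
  rw [← hexp]
  exact mul_rpow_le_of_le_mul_add hθ₀ hθ₁ (by positivity) hM.le hμ₀ (by positivity)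
    (hD_nonneg μ₀ hμ₀) hD
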